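/- Let M = M(Σ,I) be a free partially commutative monoid, Σ_0 ⊆ Σ, I_0 = (Σ_0×Σ_0) ∩ I, and M_0 = M(Σ_0,I_0), regarded as a submonoid of M via the natural embedding. Then the monoid ring ℤM is a free left ℤM_0-module (with respect to the module structure induced by the ring homomorphism ℤM_0 → ℤM). -/

import Mathlib

open scoped Classical

/-- The elementary commutation relation on words: `ab ~ ba` for `(a,b) ∈ I`. -/
def TraceRel {α : Type*} (I : α → α → Prop) : FreeMonoid α → FreeMonoid α → Prop :=
  fun u v => ∃ a b, I a b ∧ u = FreeMonoid.of a * FreeMonoid.of b ∧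
    v = FreeMonoid.of b * FreeMonoid.of a

/-- The congruence on the free monoid generated by the commutation relation. -/
def TraceCon {α : Type*} (I : α → α → Prop) : Con (FreeMonoid α) := conGen (TraceRel I)

/-- The free partially commutative monoid `M(Σ, I)`: the monoid presented by
generators `Σ` and relations `ab = ba` for `(a,b) ∈ I`. -/
abbrev TraceMonoid (α : Type*) (I : α → α → Prop) : Type _ := (TraceCon I).Quotient

/-- The canonical map `Σ* → M(Σ, I)` sending a word to its class. -/
def TraceMonoid.mk {α : Type*} (I : α → α → Prop) : FreeMonoid α →* TraceMonoid α I :=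
  Con.mk' _

/-- The projection `π_A : M(Σ, I) → M(A, I_A)` erasing all letters not in `A`. -/
noncomputable def TraceMonoid.proj {α : Type*} (I : α → α → Prop) (A : Set α) :
    TraceMonoid α I →* TraceMonoid A (fun a b => I a.1 b.1) :=
  Con.lift _ ((TraceMonoid.mk _).comp (FreeMonoid.lift fun c =>
    if h : c ∈ A then FreeMonoid.of (⟨c, h⟩ : A) else 1)) <| by
    refine Con.conGen_le.2 ?_
    rintro u v ⟨a, b, hI, rfl, rfl⟩
    simp only [Con.ker_rel, map_mul, MonoidHom.comp_apply, FreeMonoid.lift_eval_of]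
    by_cases ha : a ∈ A <;> by_cases hb : b ∈ A <;>
      simp only [ha, hb, dif_pos, dif_neg, not_false_iff, map_one, one_mul, mul_one]
    rw [← map_mul, ← map_mul]
    exact Quotient.sound (ConGen.Rel.of _ _ ⟨⟨a, ha⟩, ⟨b, hb⟩, hI, rfl, rfl⟩)

/-- The monoid homomorphism `M(A, I_A) → M(Σ, I)` induced by an inclusion `A ⊆ Σ`,
sending the class of a word `x ∈ A*` to its class in `M(Σ, I)`. -/
def TraceMonoid.embed {σ : Type*} (I : σ → σ → Prop) (A : Set σ) :
    TraceMonoid A (fun a b => I a.1 b.1) →* TraceMonoid σ I :=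
  Con.lift _ ((TraceMonoid.mk I).comp (FreeMonoid.map Subtype.val)) <| by
    refine Con.conGen_le.2 ?_
    rintro u v ⟨a, b, hI, rfl, rfl⟩
    simp only [Con.ker_rel, MonoidHom.comp_apply, map_mul, FreeMonoid.map_of]
    rw [← map_mul, ← map_mul]
    exact Quotient.sound (ConGen.Rel.of _ _ ⟨a.1, b.1, hI, rfl, rfl⟩)

/-!
Every trace `m ∈ M` factors uniquely as `m = u * t` with `u ∈ M₀` and `t` not left divisible
by any letter of `Σ₀`. Existence is by induction on the length of `m`. For uniqueness, a letter
`a ∈ Σ₀` dividing `u` on the left is a minimal letter of `u' * t'`, hence of `u'`, since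
`t'` has no minimal letter in `Σ₀`; cancelling `a` (erasing its first occurrence is well defined
on traces) reduces to a shorter `u`. So `M ≅ M₀ × T` as left `M₀`-sets, and `ℤM` is free over
`ℤM₀` with basis `T`.
-/

open MonoidAlgebra Finsupp in
theorem MonoidAlgebra.free_of_bijective_mul {R N M T : Type*} [Semiring R] [Monoid N] [Monoid M]
    (f : N →* M) (g : T → M) (hfg : Function.Bijective fun p : T × N => f p.2 * g p.1) :
    @Module.Free R[N] R[M] _ _ (Module.compHom _ (mapDomainRingHom R f)) := by
  let _ : Module R[N] R[M] := Module.compHom _ (mapDomainRingHom R f)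
  let A : (T →₀ R[N]) ≃+ R[M] := (mapRange.addEquiv coeffAddEquiv).trans <|
    Finsupp.curryAddEquiv.symm.trans <|
      (Finsupp.domCongr (.ofBijective _ hfg)).trans coeffAddEquiv.symm
  let φ := linearCombination R[N] fun t => single (g t) (1 : R)
  have hφ : (φ : (T →₀ R[N]) →+ R[M]) = A := by
    ext t n r : 3
    simp only [AddMonoidHom.comp_apply, Finsupp.singleAddHom_apply, singleAddHom_apply,
      AddMonoidHom.coe_coe, linearCombination_single, φ]
    change mapDomainRingHom R f (single n r) * single (g t) 1 = _
    simp [A]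
  exact Module.Free.of_equiv (LinearEquiv.ofBijective φ (congrArg DFunLike.coe hφ ▸ A.bijective))

namespace TraceMonoid

section

variable {α : Type*} {I : α → α → Prop}

variable (I) in
def of (a : α) : TraceMonoid α I := mk I (FreeMonoid.of a)

@[elab_as_elim]
theorem induction_on {motive : TraceMonoid α I → Prop} (m : TraceMonoid α I) (one : motive 1)
    (of_mul : ∀ a m, motive m → motive (of I a * m)) : motive m := by
  obtain ⟨w, rfl⟩ := Con.mk'_surjective m
  induction w using FreeMonoid.inductionOn' with
  | one => exact one
  | of_mul a w ih => rw [map_mul]; exact of_mul a _ ih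

theorem commute_of {a b : α} (h : I a b) : Commute (of I a) (of I b) :=
  Quotient.sound (ConGen.Rel.of _ _ ⟨a, b, h, rfl, rfl⟩)

theorem eq_one_or_exists_eq_of_mul (m : TraceMonoid α I) : m = 1 ∨ ∃ a m', m = of I a * m' := by
  induction m using induction_on with
  | one => exact .inl rfl
  | of_mul a m _ => exact .inr ⟨a, m, rfl⟩

variable (I) in
def length : TraceMonoid α I →* Multiplicative ℕ :=
  Con.lift _ (FreeMonoid.lift fun _ => .ofAdd 1) <| Con.conGen_le.2 <| by
    rintro _ _ ⟨a, b, -, rfl, rfl⟩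
    rfl

theorem length_of_mul (a : α) (m : TraceMonoid α I) :
    (length I (of I a * m)).toAdd = (length I m).toAdd + 1 := by
  rw [map_mul, toAdd_mul, add_comm]; rfl

theorem _root_.TraceCon.mem_toList_iff {w₁ w₂ : FreeMonoid α} (h : TraceCon I w₁ w₂) (a : α) :
    a ∈ w₁.toList ↔ a ∈ w₂.toList := by
  induction h with
  | of _ _ h => obtain ⟨b, c, -, rfl, rfl⟩ := h; simp [or_comm]
  | refl => rfl
  | symm _ ih => exact ih.symm
  | trans _ _ ih₁ ih₂ => exact ih₁.trans ih₂
  | mul _ _ ih₁ ih₂ => simp [ih₁, ih₂]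

theorem _root_.TraceCon.erase_toList {w₁ w₂ : FreeMonoid α} (h : TraceCon I w₁ w₂) (a : α) :
    TraceCon I (.ofList (w₁.toList.erase a)) (.ofList (w₂.toList.erase a)) := by
  induction h with
  | of _ _ h =>
    obtain ⟨b, c, hbc, rfl, rfl⟩ := h
    simp only [FreeMonoid.toList_mul, FreeMonoid.toList_of, List.singleton_append,
      List.erase_cons, beq_iff_eq, List.erase_nil]
    split_ifs <;> subst_vars
    all_goals first | exact (TraceCon I).refl _ | exact ConGen.Rel.of _ _ ⟨b, c, hbc, rfl, rfl⟩
  | refl => exact (TraceCon I).refl _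
  | symm _ ih => exact (TraceCon I).symm ih
  | trans _ _ ih₁ ih₂ => exact (TraceCon I).trans ih₁ ih₂
  | mul h₁ h₂ ih₁ ih₂ =>
    simp only [FreeMonoid.toList_mul, List.erase_append, TraceCon.mem_toList_iff h₁]
    split_ifs
    · exact (TraceCon I).mul ih₁ h₂
    · exact (TraceCon I).mul h₁ ih₂

variable (I) in
noncomputable def erase (a : α) (m : TraceMonoid α I) : TraceMonoid α I :=
  Con.liftOn m (fun w => mk I (.ofList (w.toList.erase a))) fun _ _ h =>
    (Con.eq _).2 (TraceCon.erase_toList h a)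

theorem erase_of_mul (a : α) (m : TraceMonoid α I) : erase I a (of I a * m) = m := by
  obtain ⟨w, rfl⟩ := Con.mk'_surjective m
  show mk I _ = mk I w
  simp

theorem of_mul_left_cancel {a : α} {x y : TraceMonoid α I} (h : of I a * x = of I a * y) :
    x = y := by
  simpa [erase_of_mul] using congrArg (erase I a) h

variable (I) in
def minLettersStep (a : α) (S : Set α) : Set α := insert a {c ∈ S | Commute (of I c) (of I a)}

theorem minLettersStep_comp_comm {a b : α} (h : Commute (of I a) (of I b)) :
    minLettersStep I a ∘ minLettersStep I b = minLettersStep I b ∘ minLettersStep I a := by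
  funext S
  ext c
  simp only [minLettersStep, Function.comp_apply, Set.mem_insert_iff, Set.mem_ofPred_eq]
  grind [Commute.refl, Commute.symm]

variable (I) in
/-- `minLettersUpdate I x S` is the set of minimal letters of `x * y` whenever `S` is that
of `y`. -/
def minLettersUpdate : TraceMonoid α I →* Function.End (Set α) :=
  Con.lift _ (FreeMonoid.lift (minLettersStep I)) <| Con.conGen_le.2 <| by
    rintro _ _ ⟨a, b, h, rfl, rfl⟩
    exact minLettersStep_comp_comm (commute_of h)

variable (I) in
def minLetters (m : TraceMonoid α I) : Set α := minLettersUpdate I m ∅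

theorem minLettersUpdate_mul_apply (x y : TraceMonoid α I) (S : Set α) :
    minLettersUpdate I (x * y) S = minLettersUpdate I x (minLettersUpdate I y S) := by
  rw [map_mul]; rfl

theorem minLettersUpdate_one_apply (S : Set α) : minLettersUpdate I 1 S = S := by
  rw [map_one]; rfl

theorem minLetters_mul (x y : TraceMonoid α I) :
    minLetters I (x * y) = minLettersUpdate I x (minLetters I y) :=
  minLettersUpdate_mul_apply x y ∅

theorem minLettersUpdate_of (a : α) (S : Set α) :
    minLettersUpdate I (of I a) S = minLettersStep I a S := rfl

theorem minLettersUpdate_subset (x : TraceMonoid α I) (S : Set α) :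
    minLettersUpdate I x S ⊆ minLetters I x ∪ S := by
  induction x using induction_on with
  | one => simp [minLetters, minLettersUpdate_one_apply]
  | of_mul a x ih =>
    rw [minLetters_mul, minLettersUpdate_mul_apply, minLettersUpdate_of, minLettersUpdate_of]
    rintro c (rfl | ⟨hc, hca⟩)
    · exact .inl (.inl rfl)
    · exact (ih hc).imp (fun hc => .inr ⟨hc, hca⟩) id

theorem of_dvd_iff_mem_minLetters {a : α} {m : TraceMonoid α I} :
    of I a ∣ m ↔ a ∈ minLetters I m := by
  refine ⟨fun ⟨m', hm'⟩ => by simp [hm', minLetters_mul, minLettersUpdate_of, minLettersStep],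
    fun h => ?_⟩
  induction m using induction_on with
  | one => simp [minLetters, minLettersUpdate_one_apply] at h
  | of_mul b m ih =>
    rw [minLetters_mul, minLettersUpdate_of, minLettersStep] at h
    obtain rfl | ⟨ha, hab⟩ := h
    · exact dvd_mul_right _ _
    · obtain ⟨m', rfl⟩ := ih ha
      exact ⟨of I b * m', hab.symm.left_comm m'⟩

end

section

variable {σ : Type*} {I : σ → σ → Prop} {S₀ : Set σ}

theorem embed_of (a : S₀) : embed I S₀ (of _ a) = of I a := rfl

theorem proj_of_mem {a : σ} (ha : a ∈ S₀) : proj I S₀ (of I a) = of _ ⟨a, ha⟩ := by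
  show mk _ (if h : a ∈ S₀ then FreeMonoid.of (⟨a, h⟩ : S₀) else 1) = _
  rw [dif_pos ha]
  rfl

theorem proj_embed (u : TraceMonoid S₀ fun a b => I a.1 b.1) : proj I S₀ (embed I S₀ u) = u := by
  induction u using induction_on with
  | one => simp
  | of_mul a u ih => rw [map_mul, map_mul, ih, embed_of, proj_of_mem a.2]

theorem of_dvd_of_of_dvd_embed {a : S₀} {u : TraceMonoid S₀ fun a b => I a.1 b.1}
    (h : of I a.1 ∣ embed I S₀ u) : of _ a ∣ u := by
  simpa [proj_embed, proj_of_mem a.2] using map_dvd (proj I S₀) h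

variable (I S₀) in
def IsReduced (t : TraceMonoid σ I) : Prop := ∀ a ∈ S₀, ¬of I a ∣ t

theorem of_dvd_of_of_dvd_embed_mul {a : S₀} {u : TraceMonoid S₀ fun a b => I a.1 b.1}
    {t : TraceMonoid σ I} (ht : IsReduced I S₀ t) (h : of I a.1 ∣ embed I S₀ u * t) :
    of _ a ∣ u := by
  rw [of_dvd_iff_mem_minLetters, minLetters_mul] at h
  rcases minLettersUpdate_subset _ _ h with h | h
  · exact of_dvd_of_of_dvd_embed (of_dvd_iff_mem_minLetters.2 h)
  · exact absurd (of_dvd_iff_mem_minLetters.2 h) (ht a a.2)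

theorem exists_embed_mul_eq (m : TraceMonoid σ I) :
    ∃ u t, IsReduced I S₀ t ∧ embed I S₀ u * t = m := by
  by_cases hm : IsReduced I S₀ m
  · exact ⟨1, m, hm, by rw [map_one, one_mul]⟩
  obtain ⟨a, ha, m', rfl⟩ : ∃ a ∈ S₀, ∃ m', m = of I a * m' := by
    simpa [IsReduced, Dvd.dvd] using hm
  obtain ⟨u, t, ht, rfl⟩ := exists_embed_mul_eq m'
  exact ⟨of _ ⟨a, ha⟩ * u, t, ht, by rw [map_mul, embed_of, mul_assoc]⟩
termination_by (length I m).toAdd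
decreasing_by subst_vars; rw [length_of_mul]; omega

theorem eq_and_eq_of_embed_mul_eq {u u' : TraceMonoid S₀ fun a b => I a.1 b.1}
    {t t' : TraceMonoid σ I} (ht : IsReduced I S₀ t) (ht' : IsReduced I S₀ t')
    (h : embed I S₀ u * t = embed I S₀ u' * t') : u = u' ∧ t = t' := by
  induction u using induction_on generalizing u' with
  | one =>
    rw [map_one, one_mul] at h
    obtain rfl | ⟨a, w, rfl⟩ := eq_one_or_exists_eq_of_mul u'
    · simpa using h
    · exact absurd ⟨embed I S₀ w * t', by rw [h, map_mul, embed_of, mul_assoc]⟩ (ht a a.2)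
  | of_mul a w ih =>
    obtain ⟨w', rfl⟩ := of_dvd_of_of_dvd_embed_mul ht'
      ⟨embed I S₀ w * t, by rw [← h, map_mul, embed_of, mul_assoc]⟩
    simp only [map_mul, embed_of, mul_assoc] at h
    obtain ⟨rfl, rfl⟩ := ih (of_mul_left_cancel h)
    exact ⟨rfl, rfl⟩

theorem bijective_embed_mul :
    Function.Bijective fun p : {t // IsReduced I S₀ t} × TraceMonoid S₀ (fun a b => I a.1 b.1) =>
      embed I S₀ p.2 * p.1 := by
  refine ⟨?_, fun m => ?_⟩
  · rintro ⟨⟨t, ht⟩, u⟩ ⟨⟨t', ht'⟩, u'⟩ h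
    obtain ⟨rfl, rfl⟩ := eq_and_eq_of_embed_mul_eq ht ht' h
    rfl
  · obtain ⟨u, t, ht, rfl⟩ := exists_embed_mul_eq (S₀ := S₀) m
    exact ⟨(⟨t, ht⟩, u), rfl⟩

end

end TraceMonoid

theorem monoidAlgebra_free_over_submonoid_general {σ : Type*} (I : σ → σ → Prop) (S₀ : Set σ) :
    @Module.Free (MonoidAlgebra ℤ (TraceMonoid S₀ fun a b => I a.1 b.1))
      (MonoidAlgebra ℤ (TraceMonoid σ I)) _ _
      (Module.compHom _ (MonoidAlgebra.mapDomainRingHom ℤ (TraceMonoid.embed I S₀))) :=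
  MonoidAlgebra.free_of_bijective_mul _ _ TraceMonoid.bijective_embed_mul

/-- **Lemma 1.4.** For a free partially commutative monoid `M = M(Σ, I)` and
`M₀ = M(Σ₀, I₀)` with `Σ₀ ⊆ Σ`, `I₀ = (Σ₀×Σ₀) ∩ I`, the monoid ring `ℤM` is a free
(left) `ℤM₀`-module, with respect to the module structure induced by the ring
homomorphism `ℤM₀ → ℤM` coming from the natural embedding `M₀ → M`. -/
theorem monoidAlgebra_free_over_submonoid {σ : Type*} [Fintype σ] (I : σ → σ → Prop)
    (hsym : Symmetric I) (hirr : Irreflexive I) (S₀ : Set σ) :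
    @Module.Free (MonoidAlgebra ℤ (TraceMonoid S₀ fun a b => I a.1 b.1))
      (MonoidAlgebra ℤ (TraceMonoid σ I)) _ _
      (Module.compHom _ (MonoidAlgebra.mapDomainRingHom ℤ (TraceMonoid.embed I S₀))) :=
  monoidAlgebra_free_over_submonoid_general I S₀
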